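/- Let n ≥ 4. Suppose (d, β_1, β_2) and (d', β_1', β_2') are two triples of elements of the quasi-abelian group QA_n such that in each triple: the first entry lies in QA_n \ H_1, the second entry has order 2, the third entry has order 2^{n-2}, the relation β_1 β_2 d^2 = 1 (respectively β_1' β_2' d'^2 = 1) holds, and the three entries generate QA_n. Then there exists an automorphism φ of QA_n with φ(d) = d', φ(β_1) = β_1' and φ(β_2) = β_2'. -/

import Mathlib

/-- The relators of the quasi-abelian group `QA_n`:
`x^(2^(n-1)) = 1`, `y^2 = 1`, `y * x * y⁻¹ = x^(2^(n-2)+1)`.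
The generator `x` is encoded by `true` and `y` by `false`. -/
def qaRels (n : ℕ) : Set (FreeGroup Bool) :=
  {FreeGroup.of true ^ 2 ^ (n - 1),
   FreeGroup.of false ^ 2,
   FreeGroup.of false * FreeGroup.of true * (FreeGroup.of false)⁻¹ *
     (FreeGroup.of true ^ (2 ^ (n - 2) + 1))⁻¹}

/-- The quasi-abelian group `QA_n`, given by the presentation
`⟨x, y ∣ x^(2^(n-1)) = y^2 = 1, y x y⁻¹ = x^(2^(n-2)+1)⟩`. -/
abbrev QA (n : ℕ) : Type := PresentedGroup (qaRels n)

/-- The generator `x` of `QA_n`. -/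
def qx (n : ℕ) : QA n := PresentedGroup.of true

/-- The generator `y` of `QA_n`. -/
def qy (n : ℕ) : QA n := PresentedGroup.of false

/-- The index-two subgroup `H₁ = ⟨x², y⟩` of `QA_n`. -/
def H1 (n : ℕ) : Subgroup (QA n) := Subgroup.closure {qx n ^ 2, qy n}

/-!
Pairs `(a, e) ∈ ℤ/2^(n-1) × ℤ/2`, standing for `x^a y^e`, form a faithful model of `QA_n`. In the
model an involution is either central or acts on every element `g` by `g ↦ g^(2^(n-2)+1)`.
If `β₁` were central, `QA_n = ⟨d, β₁⟩` (note `β₂ = β₁⁻¹ d⁻²`) would be abelian; so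
`β₁ d β₁⁻¹ = d^(2^(n-2)+1)` and `x ↦ d, y ↦ β₁` is a surjective, hence bijective, endomorphism of
the finite group `QA_n`. Composing the inverse of one such automorphism with the other gives `φ`.
-/
lemma ZMod.eq_zero_or_eq_one (e : ZMod 2) : e = 0 ∨ e = 1 := by
  revert e; decide

lemma natCast_four_mul_self (k : ℕ) : (4 * k : ZMod (4 * k)) = 0 := by
  exact_mod_cast ZMod.natCast_self (4 * k)

lemma two_mul_natCast_mul_self_of_even {k : ℕ} (hk : Even k) : (2 * k * k : ZMod (4 * k)) = 0 := by
  have h : ((2 * k * k : ℕ) : ZMod (4 * k)) = 0 := by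
    rw [ZMod.natCast_eq_zero_iff]
    obtain ⟨j, rfl⟩ := hk
    exact ⟨j, by ring⟩
  exact_mod_cast h

/-- `⟨a, e⟩` stands for `x^a y^e` in `QA_n`, where `4 * k = 2^(n-1)`; moving `y^e` past `x^b` turns
it into `x^(b * twist k e)`. -/
@[ext]
structure QAModel (k : ℕ) where
  a : ZMod (4 * k)
  e : ZMod 2

namespace QAModel

variable {k : ℕ}

def twist (k : ℕ) (e : ZMod 2) : ZMod (4 * k) := 1 + 2 * k * e.val

@[simp] lemma twist_zero (k : ℕ) : twist k 0 = 1 := by simp [twist]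

@[simp] lemma twist_one (k : ℕ) : twist k 1 = 1 + 2 * k := by simp [twist, ZMod.val_one]

lemma twist_add (k : ℕ) (e f : ZMod 2) : twist k (e + f) = twist k e * twist k f := by
  rcases e.eq_zero_or_eq_one with rfl | rfl <;> rcases f.eq_zero_or_eq_one with rfl | rfl <;> simp
  rw [show (1 + 1 : ZMod 2) = 0 by decide, twist_zero]
  linear_combination (-1 - (k : ZMod (4 * k))) * natCast_four_mul_self k

instance : Mul (QAModel k) := ⟨fun g h => ⟨g.a + h.a * twist k g.e, g.e + h.e⟩⟩

instance : One (QAModel k) := ⟨⟨0, 0⟩⟩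

instance : Inv (QAModel k) := ⟨fun g => ⟨-(g.a * twist k g.e), g.e⟩⟩

lemma mk_mul_mk (a b : ZMod (4 * k)) (e f : ZMod 2) :
    (⟨a, e⟩ * ⟨b, f⟩ : QAModel k) = ⟨a + b * twist k e, e + f⟩ := rfl

lemma one_def : (1 : QAModel k) = ⟨0, 0⟩ := rfl

lemma inv_mk (a : ZMod (4 * k)) (e : ZMod 2) :
    (⟨a, e⟩ : QAModel k)⁻¹ = ⟨-(a * twist k e), e⟩ := rfl

instance : Group (QAModel k) where
  mul_assoc := by
    rintro ⟨a, e⟩ ⟨b, f⟩ ⟨c, g⟩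
    simp only [mk_mul_mk, twist_add, add_assoc, mk.injEq, and_true]
    ring
  one_mul := by
    rintro ⟨a, e⟩
    simp [one_def, mk_mul_mk]
  mul_one := by
    rintro ⟨a, e⟩
    simp [one_def, mk_mul_mk]
  inv_mul_cancel := by
    rintro ⟨a, e⟩
    simp only [inv_mk, mk_mul_mk, one_def, CharTwo.add_self_eq_zero, mk.injEq, and_true]
    ring

lemma mk_zero_pow (c : ZMod (4 * k)) (m : ℕ) : (⟨c, 0⟩ : QAModel k) ^ m = ⟨m * c, 0⟩ := by
  induction m with
  | zero => simp [one_def]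
  | succ m ih => simp only [pow_succ, ih, mk_mul_mk, twist_zero, add_zero]; push_cast; ring_nf

lemma mk_zero_mul_mk (a : ZMod (4 * k)) (e : ZMod 2) :
    (⟨a, 0⟩ * ⟨0, e⟩ : QAModel k) = ⟨a, e⟩ := by
  simp [mk_mul_mk]

lemma zero_one_pow (m : ℕ) : (⟨0, 1⟩ : QAModel k) ^ m = ⟨0, m⟩ := by
  induction m with
  | zero => simp [one_def]
  | succ m ih => simp [pow_succ, ih, mk_mul_mk]

lemma sq_mk (a : ZMod (4 * k)) (e : ZMod 2) :
    (⟨a, e⟩ : QAModel k) ^ 2 = ⟨a * (1 + twist k e), 0⟩ := by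
  simp only [sq, mk_mul_mk, CharTwo.add_self_eq_zero, mk.injEq, and_true]
  ring

lemma pow_four_mul (g : QAModel k) : g ^ (4 * k) = 1 := by
  rw [show 4 * k = 2 * (2 * k) by ring, pow_mul, sq_mk, mk_zero_pow, one_def, mk.injEq]
  refine ⟨?_, rfl⟩
  simp only [twist]
  push_cast
  linear_combination g.a * (1 + k * g.e.val) * natCast_four_mul_self k

lemma pow_two_mul_add_one (a : ZMod (4 * k)) (e : ZMod 2) :
    (⟨a, e⟩ : QAModel k) ^ (2 * k + 1) = ⟨k * (a * (1 + twist k e)) + a, e⟩ := by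
  rw [pow_succ, pow_mul, sq_mk, mk_zero_pow, mk_mul_mk, twist_zero, zero_add, mul_one]

lemma commute_or_conj_eq_pow_of_sq_eq_one (hk : Even k) {β : QAModel k} (hβ : β ^ 2 = 1) :
    (∀ g, Commute β g) ∨ ∀ g, β * g * β⁻¹ = g ^ (2 * k + 1) := by
  obtain ⟨b, f⟩ := β
  have hb : b * (1 + twist k f) = 0 := congrArg a ((sq_mk b f).symm.trans hβ)
  have hkk := two_mul_natCast_mul_self_of_even hk
  have h4 := natCast_four_mul_self k
  rcases f.eq_zero_or_eq_one with rfl | rfl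
  · left
    rintro ⟨a, e⟩
    simp only [Commute, SemiconjBy, mk_mul_mk, mk.injEq, add_comm e, and_true]
    rcases e.eq_zero_or_eq_one with rfl | rfl
    · simp [add_comm]
    · simp only [twist_zero, twist_one] at hb ⊢
      linear_combination (-(k : ZMod (4 * k))) * hb
  · right
    rintro ⟨a, e⟩
    simp only [pow_two_mul_add_one, mk_mul_mk, inv_mk, mk.injEq, add_comm (1 : ZMod 2),
      add_assoc, CharTwo.add_self_eq_zero, add_zero, and_true]
    rcases e.eq_zero_or_eq_one with rfl | rfl
    · simp only [zero_add, twist_zero, twist_one] at hb ⊢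
      linear_combination (-b * (1 + k)) * h4
    · simp only [twist_zero, twist_one, CharTwo.add_self_eq_zero] at hb ⊢
      linear_combination (-(k : ZMod (4 * k))) * hb + (b - a) * hkk

instance [NeZero k] : Finite (QAModel k) :=
  Finite.of_injective (fun g : QAModel k => (g.a, g.e)) fun _ _ h =>
    QAModel.ext (congrArg Prod.fst h) (congrArg Prod.snd h)

lemma zero_one_mul_one_zero_ne [NeZero k] : (⟨0, 1⟩ * ⟨1, 0⟩ : QAModel k) ≠ ⟨1, 0⟩ * ⟨0, 1⟩ := by
  intro h
  have h2k : ((2 * k : ℕ) : ZMod (4 * k)) = 0 := by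
    simpa [mk_mul_mk] using h
  have hk := NeZero.ne k
  have := Nat.le_of_dvd (by omega) ((ZMod.natCast_eq_zero_iff _ _).mp h2k)
  omega

end QAModel

lemma two_pow_sub_one_eq_four_mul {n : ℕ} (hn : 3 ≤ n) : 2 ^ (n - 1) = 4 * 2 ^ (n - 3) := by
  rw [show n - 1 = 2 + (n - 3) by omega, pow_add]; rfl

lemma two_pow_sub_two_eq_two_mul {n : ℕ} (hn : 3 ≤ n) : 2 ^ (n - 2) = 2 * 2 ^ (n - 3) := by
  rw [show n - 2 = 1 + (n - 3) by omega, pow_add]; rfl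

namespace QA

variable {n : ℕ}

lemma qx_pow_two_pow : qx n ^ 2 ^ (n - 1) = 1 := by
  simpa [qx, PresentedGroup.of] using
    PresentedGroup.one_of_mem (rels := qaRels n) (Set.mem_insert _ _)

lemma qy_sq : qy n ^ 2 = 1 := by
  simpa [qy, PresentedGroup.of] using
    PresentedGroup.one_of_mem (rels := qaRels n) (Set.mem_insert_of_mem _ (Set.mem_insert _ _))

lemma qy_conj_qx : qy n * qx n * (qy n)⁻¹ = qx n ^ (2 ^ (n - 2) + 1) := by
  simpa [qx, qy, PresentedGroup.of, mul_inv_eq_one] using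
    PresentedGroup.one_of_mem (rels := qaRels n)
      (Set.mem_insert_of_mem _ (Set.mem_insert_of_mem _ rfl))

lemma qy_inv : (qy n)⁻¹ = qy n :=
  inv_eq_of_mul_eq_one_right (by rw [← sq, qy_sq])

lemma qx_inv : (qx n)⁻¹ = qx n ^ (2 ^ (n - 1) - 1) :=
  inv_eq_of_mul_eq_one_right <| by
    rw [← pow_succ', Nat.sub_add_cancel Nat.one_le_two_pow, qx_pow_two_pow]

lemma exists_eq_qx_pow_mul_qy_pow (g : QA n) : ∃ a b : ℕ, g = qx n ^ a * qy n ^ b := by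
  have hg : g ∈ Subgroup.closure (Set.range (PresentedGroup.of : Bool → QA n)) := by
    rw [PresentedGroup.closure_range_of]; trivial
  have hx (a b m : ℕ) :
      ∃ a' b' : ℕ, qx n ^ m * (qx n ^ a * qy n ^ b) = qx n ^ a' * qy n ^ b' :=
    ⟨m + a, b, by rw [pow_add, mul_assoc]⟩
  have hy (a b : ℕ) : ∃ a' b' : ℕ, qy n * (qx n ^ a * qy n ^ b) = qx n ^ a' * qy n ^ b' := by
    refine ⟨(2 ^ (n - 2) + 1) * a, b + 1, ?_⟩
    rw [pow_mul, ← qy_conj_qx, conj_pow, pow_succ']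
    group
  induction hg using Subgroup.closure_induction_left with
  | one => exact ⟨0, 0, by simp⟩
  | mul_left t ht g _ ih =>
    obtain ⟨_ | _, rfl⟩ := ht <;> obtain ⟨a, b, rfl⟩ := ih
    · exact hy a b
    · change ∃ a' b' : ℕ, qx n * _ = _
      simpa using hx a b 1
  | inv_mul_cancel t ht g _ ih =>
    obtain ⟨_ | _, rfl⟩ := ht <;> obtain ⟨a, b, rfl⟩ := ih
    · change ∃ a' b' : ℕ, (qy n)⁻¹ * _ = _
      simpa [qy_inv] using hy a b
    · change ∃ a' b' : ℕ, (qx n)⁻¹ * _ = _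
      simpa [qx_inv] using hx a b _

section Lift

variable {G : Type*} [Group G] {X Y : G}

def lift (hX : X ^ 2 ^ (n - 1) = 1) (hY : Y ^ 2 = 1)
    (hYX : Y * X * Y⁻¹ = X ^ (2 ^ (n - 2) + 1)) : QA n →* G :=
  PresentedGroup.toGroup (f := fun t => cond t X Y) <| by
    rintro r (rfl | rfl | rfl) <;> simp [hX, hY, hYX]

lemma lift_qx (hX : X ^ 2 ^ (n - 1) = 1) (hY : Y ^ 2 = 1)
    (hYX : Y * X * Y⁻¹ = X ^ (2 ^ (n - 2) + 1)) : lift hX hY hYX (qx n) = X :=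
  PresentedGroup.toGroup.of _

lemma lift_qy (hX : X ^ 2 ^ (n - 1) = 1) (hY : Y ^ 2 = 1)
    (hYX : Y * X * Y⁻¹ = X ^ (2 ^ (n - 2) + 1)) : lift hX hY hYX (qy n) = Y :=
  PresentedGroup.toGroup.of _

end Lift

open QAModel in
def toModel (hn : 3 ≤ n) : QA n →* QAModel (2 ^ (n - 3)) :=
  lift (X := ⟨1, 0⟩) (Y := ⟨0, 1⟩)
    (by rw [two_pow_sub_one_eq_four_mul hn, pow_four_mul])
    (by rw [zero_one_pow]; rfl)
    (by
      rw [two_pow_sub_two_eq_two_mul hn, mk_zero_pow]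
      simp only [mk_mul_mk, inv_mk, twist_one, mk.injEq]
      exact ⟨by push_cast; ring, by decide⟩)

open QAModel in
lemma toModel_qx_pow_mul_qy_pow (hn : 3 ≤ n) (a b : ℕ) :
    toModel hn (qx n ^ a * qy n ^ b) = ⟨a, b⟩ := by
  rw [map_mul, map_pow, map_pow, toModel, lift_qx, lift_qy, mk_zero_pow, zero_one_pow,
    mk_zero_mul_mk, mul_one]

lemma toModel_injective (hn : 3 ≤ n) : Function.Injective (toModel hn) := by
  refine (injective_iff_map_eq_one _).mpr fun g hg => ?_
  obtain ⟨a, b, rfl⟩ := exists_eq_qx_pow_mul_qy_pow g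
  rw [toModel_qx_pow_mul_qy_pow, QAModel.one_def, QAModel.mk.injEq, ZMod.natCast_eq_zero_iff,
    ZMod.natCast_eq_zero_iff, ← two_pow_sub_one_eq_four_mul hn] at hg
  obtain ⟨⟨a, rfl⟩, ⟨b, rfl⟩⟩ := hg
  rw [pow_mul, pow_mul, qx_pow_two_pow, qy_sq, one_pow, one_pow, one_mul]

lemma finite (hn : 3 ≤ n) : Finite (QA n) :=
  Finite.of_injective _ (toModel_injective hn)

lemma pow_two_pow_eq_one (hn : 3 ≤ n) (g : QA n) : g ^ 2 ^ (n - 1) = 1 :=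
  toModel_injective hn <| by
    rw [map_pow, map_one, two_pow_sub_one_eq_four_mul hn, QAModel.pow_four_mul]

lemma qy_mul_qx_ne (hn : 3 ≤ n) : qy n * qx n ≠ qx n * qy n := fun h =>
  QAModel.zero_one_mul_one_zero_ne <| by
    simpa only [map_mul, toModel, lift_qx, lift_qy] using congrArg (toModel hn) h

lemma commute_or_conj_eq_pow_of_sq_eq_one (hn : 4 ≤ n) {β : QA n} (hβ : β ^ 2 = 1) :
    (∀ g, Commute β g) ∨ ∀ g, β * g * β⁻¹ = g ^ (2 ^ (n - 2) + 1) := by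
  have hn3 : 3 ≤ n := by omega
  have hk : Even (2 ^ (n - 3)) := (Nat.even_pow' (by omega)).mpr even_two
  have hρβ : toModel hn3 β ^ 2 = 1 := by rw [← map_pow, hβ, map_one]
  refine (QAModel.commute_or_conj_eq_pow_of_sq_eq_one hk hρβ).imp (fun h g => ?_) (fun h g => ?_)
  · exact toModel_injective hn3 (by simpa only [map_mul] using (h (toModel hn3 g)).eq)
  · refine toModel_injective hn3 ?_
    rw [map_mul, map_mul, map_inv, map_pow, h, two_pow_sub_two_eq_two_mul hn3]

lemma conj_eq_pow_of_closure_eq_top (hn : 4 ≤ n) {d β : QA n} (hβ : β ^ 2 = 1)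
    (hgen : Subgroup.closure {d, β} = ⊤) : β * d * β⁻¹ = d ^ (2 ^ (n - 2) + 1) := by
  refine (commute_or_conj_eq_pow_of_sq_eq_one hn hβ).resolve_left (fun hβc => ?_) d
  have hcomm : IsMulCommutative (Subgroup.closure {d, β}) :=
    Subgroup.isMulCommutative_closure <| by
      rintro x (rfl | rfl) y (rfl | rfl)
      exacts [rfl, (hβc x).eq.symm, (hβc y).eq, rfl]
  rw [hgen] at hcomm
  exact qy_mul_qx_ne (n := n) (by omega)
    (setLike_mul_comm (Subgroup.mem_top _) (Subgroup.mem_top _))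

lemma exists_mulAut (hn : 3 ≤ n) {d β : QA n} (hβ : β ^ 2 = 1)
    (hconj : β * d * β⁻¹ = d ^ (2 ^ (n - 2) + 1)) (hgen : Subgroup.closure {d, β} = ⊤) :
    ∃ σ : MulAut (QA n), σ (qx n) = d ∧ σ (qy n) = β := by
  have := finite hn
  let f := lift (pow_two_pow_eq_one hn d) hβ hconj
  have hfx : f (qx n) = d := lift_qx ..
  have hfy : f (qy n) = β := lift_qy ..
  have hsurj : Function.Surjective f := by
    rw [← MonoidHom.range_eq_top, eq_top_iff, ← hgen, Subgroup.closure_le]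
    rintro _ (rfl | rfl)
    exacts [⟨qx n, hfx⟩, ⟨qy n, hfy⟩]
  exact ⟨MulEquiv.ofBijective f ⟨Finite.injective_iff_surjective.mpr hsurj, hsurj⟩, hfx, hfy⟩

lemma exists_mulAut_of_triple (hn : 4 ≤ n) {d β₁ β₂ : QA n} (hβ₁ : orderOf β₁ = 2)
    (hrel : β₁ * β₂ * d ^ 2 = 1) (hgen : Subgroup.closure {d, β₁, β₂} = ⊤) :
    ∃ σ : MulAut (QA n), σ (qx n) = d ∧ σ (qy n) = β₁ := by
  have hsq : β₁ ^ 2 = 1 := hβ₁ ▸ pow_orderOf_eq_one β₁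
  have hβ₂ : β₂ = β₁⁻¹ * (d ^ 2)⁻¹ := by
    rw [eq_inv_mul_iff_mul_eq, eq_inv_iff_mul_eq_one, hrel]
  have hgen₂ : Subgroup.closure {d, β₁} = ⊤ := by
    rw [eq_top_iff, ← hgen, Subgroup.closure_le]
    have hd : d ∈ Subgroup.closure {d, β₁} := Subgroup.subset_closure (by simp)
    have hβ : β₁ ∈ Subgroup.closure {d, β₁} := Subgroup.subset_closure (by simp)
    rintro _ (rfl | rfl | rfl)
    exacts [hd, hβ, hβ₂ ▸ mul_mem (inv_mem hβ) (inv_mem (pow_mem hd 2))]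
  exact exists_mulAut (by omega) hsq (conj_eq_pow_of_closure_eq_top hn hsq hgen₂) hgen₂

end QA

theorem stmt13_general (n : ℕ) (hn : 4 ≤ n) (d β₁ β₂ d' β₁' β₂' : QA n)
    (hβ₁ : orderOf β₁ = 2)
    (hrel : β₁ * β₂ * d ^ 2 = 1)
    (hgen : Subgroup.closure {d, β₁, β₂} = (⊤ : Subgroup (QA n)))
    (hβ₁' : orderOf β₁' = 2)
    (hrel' : β₁' * β₂' * d' ^ 2 = 1)
    (hgen' : Subgroup.closure {d', β₁', β₂'} = (⊤ : Subgroup (QA n))) :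
    ∃ φ : MulAut (QA n), φ d = d' ∧ φ β₁ = β₁' ∧ φ β₂ = β₂' := by
  obtain ⟨σ, hσx, hσy⟩ := QA.exists_mulAut_of_triple hn hβ₁ hrel hgen
  obtain ⟨τ, hτx, hτy⟩ := QA.exists_mulAut_of_triple hn hβ₁' hrel' hgen'
  have hd : (τ * σ⁻¹) d = d' := by
    rw [MulAut.mul_apply, MulAut.inv_apply, (MulEquiv.symm_apply_eq σ).mpr hσx.symm, hτx]
  have hβ : (τ * σ⁻¹) β₁ = β₁' := by
    rw [MulAut.mul_apply, MulAut.inv_apply, (MulEquiv.symm_apply_eq σ).mpr hσy.symm, hτy]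
  have hrelφ : β₁' * (τ * σ⁻¹) β₂ * d' ^ 2 = β₁' * β₂' * d' ^ 2 := by
    rw [hrel', ← hβ, ← hd, ← map_pow, ← map_mul, ← map_mul, hrel, map_one]
  exact ⟨τ * σ⁻¹, hd, hβ, mul_left_cancel (mul_right_cancel hrelφ)⟩

/-- For `n ≥ 4`: any two triples `(d, β₁, β₂)` and `(d', β₁', β₂')` of elements of `QA_n`,
each with first entry outside `H₁`, second entry of order `2`, third entry of order
`2^(n-2)`, satisfying `β₁ β₂ d² = 1` (resp. `β₁' β₂' d'² = 1`) and generating `QA_n`,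
are related by an automorphism of `QA_n`. -/
theorem stmt13 (n : ℕ) (hn : 4 ≤ n) (d β₁ β₂ d' β₁' β₂' : QA n)
    (hd : d ∉ H1 n) (hβ₁ : orderOf β₁ = 2) (hβ₂ : orderOf β₂ = 2 ^ (n - 2))
    (hrel : β₁ * β₂ * d ^ 2 = 1)
    (hgen : Subgroup.closure {d, β₁, β₂} = (⊤ : Subgroup (QA n)))
    (hd' : d' ∉ H1 n) (hβ₁' : orderOf β₁' = 2) (hβ₂' : orderOf β₂' = 2 ^ (n - 2))
    (hrel' : β₁' * β₂' * d' ^ 2 = 1)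
    (hgen' : Subgroup.closure {d', β₁', β₂'} = (⊤ : Subgroup (QA n))) :
    ∃ φ : MulAut (QA n), φ d = d' ∧ φ β₁ = β₁' ∧ φ β₂ = β₂' :=
  stmt13_general n hn d β₁ β₂ d' β₁' β₂' hβ₁ hrel hgen hβ₁' hrel' hgen'
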